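/- arXiv:1910.12975 — 4 statements merged into one kernel-verified Lean document; each statement's English description precedes it below -/
import Mathlib

section
/- Suppose {t_n} ⊂ ℝ is a set of sampling for PW_{2γ} and f, g ∈ PW_γ satisfy |f(t_n)| = |g(t_n)| for all n. Then |f(x)| = |g(x)| for all x ∈ ℝ. -/
set_option maxHeartbeats 1000000


noncomputable section
open MeasureTheory Complex Filter Topology

/-- `f` has exponential type at most `γ`. -/
def ExpType (γ : ℝ) (f : ℂ → ℂ) : Prop :=
  ∀ ε > 0, ∃ C > 0, ∀ z : ℂ, ‖f z‖ ≤ C * Real.exp ((γ + ε) * ‖z‖)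

/-- The Paley-Wiener space `PW_γ`: entire functions of exponential type at most `γ`
whose restriction to the real line is square integrable. -/
def IsPW (γ : ℝ) (f : ℂ → ℂ) : Prop :=
  Differentiable ℂ f ∧ ExpType γ f ∧ Integrable (fun x : ℝ => ‖f x‖ ^ 2)

/-- `f^♯(z) = conj (f (conj z))`. -/
def sharp (f : ℂ → ℂ) : ℂ → ℂ := fun z => (starRingEnd ℂ) (f ((starRingEnd ℂ) z))

/-- The (lower) Beurling density of `X` is strictly greater than `c`. -/
def hasDensityGT (X : Set ℝ) (c : ℝ) : Prop :=
  ∃ d : ℝ, c < d ∧ ∃ H : ℝ, ∀ h ≥ H, ∀ x : ℝ, d * h ≤ ((X ∩ Set.Icc x (x + h)).ncard : ℝ)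

/-- `t` is a set of sampling for `PW_γ`: frame inequalities hold. -/
def IsSamplingSet (γ : ℝ) (t : ℤ → ℝ) : Prop :=
  ∃ A B : ℝ, 0 < A ∧ 0 < B ∧ ∀ f : ℂ → ℂ, IsPW γ f →
    (A * ∫ x : ℝ, ‖f x‖ ^ 2 ≤ ∑' n : ℤ, ‖f (t n)‖ ^ 2) ∧
    (∑' n : ℤ, ‖f (t n)‖ ^ 2 ≤ B * ∫ x : ℝ, ‖f x‖ ^ 2)

namespace SamplingAux

lemma expType_mul {γ₁ γ₂ : ℝ} {f g : ℂ → ℂ} (hf : ExpType γ₁ f) (hg : ExpType γ₂ g) :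
    ExpType (γ₁ + γ₂) (fun z => f z * g z) := by
  intro ε hε
  obtain ⟨C₁, hC₁, h₁⟩ := hf (ε / 2) (by linarith)
  obtain ⟨C₂, hC₂, h₂⟩ := hg (ε / 2) (by linarith)
  refine ⟨C₁ * C₂, mul_pos hC₁ hC₂, fun z => ?_⟩
  calc ‖f z * g z‖ = ‖f z‖ * ‖g z‖ := norm_mul _ _
    _ ≤ (C₁ * Real.exp ((γ₁ + ε / 2) * ‖z‖)) * (C₂ * Real.exp ((γ₂ + ε / 2) * ‖z‖)) :=
      mul_le_mul (h₁ z) (h₂ z) (norm_nonneg _) (mul_pos hC₁ (Real.exp_pos _)).le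
    _ = C₁ * C₂ * Real.exp ((γ₁ + γ₂ + ε) * ‖z‖) := by
      rw [mul_mul_mul_comm, ← Real.exp_add]
      congr 1
      ring

lemma expType_sub {τ : ℝ} {f g : ℂ → ℂ} (hf : ExpType τ f) (hg : ExpType τ g) :
    ExpType τ (fun z => f z - g z) := by
  intro ε hε
  obtain ⟨C₁, hC₁, h₁⟩ := hf ε hε
  obtain ⟨C₂, hC₂, h₂⟩ := hg ε hε
  refine ⟨C₁ + C₂, by linarith, fun z => ?_⟩
  calc ‖f z - g z‖ ≤ ‖f z‖ + ‖g z‖ := norm_sub_le _ _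
    _ ≤ C₁ * Real.exp ((τ + ε) * ‖z‖) + C₂ * Real.exp ((τ + ε) * ‖z‖) :=
      add_le_add (h₁ z) (h₂ z)
    _ = (C₁ + C₂) * Real.exp ((τ + ε) * ‖z‖) := by ring

lemma norm_sharp (f : ℂ → ℂ) (z : ℂ) : ‖sharp f z‖ = ‖f ((starRingEnd ℂ) z)‖ := by
  simp [sharp]

lemma expType_sharp {γ : ℝ} {f : ℂ → ℂ} (hf : ExpType γ f) : ExpType γ (sharp f) := by
  intro ε hε
  obtain ⟨C, hC, h⟩ := hf ε hε
  refine ⟨C, hC, fun z => ?_⟩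
  rw [norm_sharp]
  calc ‖f ((starRingEnd ℂ) z)‖ ≤ C * Real.exp ((γ + ε) * ‖(starRingEnd ℂ) z‖) := h _
    _ = C * Real.exp ((γ + ε) * ‖z‖) := by rw [RCLike.norm_conj]

lemma differentiable_sharp {f : ℂ → ℂ} (hf : Differentiable ℂ f) :
    Differentiable ℂ (sharp f) := by
  intro z
  set w := (starRingEnd ℂ) z with hw
  have hd : HasDerivAt f (deriv f w) w := (hf w).hasDerivAt
  have key : HasDerivAt (sharp f) ((starRingEnd ℂ) (deriv f w)) z := by
    rw [hasDerivAt_iff_tendsto_slope]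
    have h1 : Tendsto (starRingEnd ℂ) (𝓝[≠] z) (𝓝[≠] w) := by
      rw [tendsto_nhdsWithin_iff]
      constructor
      · exact (Complex.continuous_conj.tendsto z).mono_left nhdsWithin_le_nhds
      · filter_upwards [self_mem_nhdsWithin] with z' hz'
        simp only [Set.mem_compl_iff, Set.mem_singleton_iff] at hz' ⊢
        exact fun h => hz' ((starRingEnd ℂ).injective (by rw [h]))
    have h2 : Tendsto (slope f w) (𝓝[≠] w) (𝓝 (deriv f w)) :=
      hasDerivAt_iff_tendsto_slope.1 hd
    have h3 : Tendsto (fun z' => (starRingEnd ℂ) (slope f w ((starRingEnd ℂ) z')))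
        (𝓝[≠] z) (𝓝 ((starRingEnd ℂ) (deriv f w))) :=
      (Complex.continuous_conj.tendsto _).comp (h2.comp h1)
    convert h3 using 1
    funext z'
    simp only [slope, sharp, hw, vsub_eq_sub, smul_eq_mul, map_mul, map_inv₀, map_sub,
      Complex.conj_conj]
  exact key.differentiableAt

lemma differentiable_deriv {f : ℂ → ℂ} (hf : Differentiable ℂ f) :
    Differentiable ℂ (deriv f) := by
  have h := (analyticOnNhd_univ_iff_differentiable.2 hf).deriv
  exact fun z => (h z (Set.mem_univ z)).differentiableAt

/-- Phragmén–Lindelöf bound in the closed upper half plane for a function of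
exponential growth bounded on the real axis. -/
lemma upper_half_bound {F : ℂ → ℂ} {b C₁ M₀ : ℝ} (hb : 0 ≤ b) (hC₁ : 0 < C₁)
    (hd : Differentiable ℂ F)
    (hgrow : ∀ z : ℂ, ‖F z‖ ≤ C₁ * Real.exp (b * ‖z‖))
    (hreal : ∀ x : ℝ, ‖F x‖ ≤ M₀) :
    ∀ z : ℂ, 0 ≤ z.im → ‖F z‖ ≤ max M₀ C₁ * Real.exp ((b + 1) * z.im) := by
  set a : ℝ := b + 1 with ha
  set φ : ℂ → ℂ := fun z => F z * Complex.exp (Complex.I * (a : ℂ) * z) with hφ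
  have hφd : Differentiable ℂ φ :=
    hd.mul ((differentiable_const _).mul differentiable_id).cexp
  have hφnorm : ∀ z : ℂ, ‖φ z‖ = ‖F z‖ * Real.exp (-(a * z.im)) := by
    intro z
    rw [hφ]
    simp only [norm_mul, Complex.norm_exp]
    congr 2
    simp [Complex.mul_re, Complex.mul_im]
  have hO : ∀ z : ℂ, ‖φ z‖ ≤ C₁ * Real.exp ((b + a) * ‖z‖) := by
    intro z
    rw [hφnorm]
    have h1 : ‖F z‖ ≤ C₁ * Real.exp (b * ‖z‖) := hgrow z
    have h2 : Real.exp (-(a * z.im)) ≤ Real.exp (a * ‖z‖) := by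
      apply Real.exp_le_exp.2
      have : |z.im| ≤ ‖z‖ := by
        exact Complex.abs_im_le_norm z
      nlinarith [abs_nonneg z.im, neg_abs_le z.im]
    calc ‖F z‖ * Real.exp (-(a * z.im)) ≤ (C₁ * Real.exp (b * ‖z‖)) * Real.exp (a * ‖z‖) :=
        mul_le_mul h1 h2 (Real.exp_pos _).le (by positivity)
      _ = C₁ * Real.exp ((b + a) * ‖z‖) := by
        rw [mul_assoc, ← Real.exp_add]; congr 2; ring
  have hBig : ∀ (S : Set ℂ), φ =O[Bornology.cobounded ℂ ⊓ Filter.principal S]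
      fun z => Real.exp ((b + a) * ‖z‖ ^ (1 : ℝ)) := by
    intro S
    apply Asymptotics.IsBigO.of_bound C₁
    filter_upwards with z
    have h := hO z
    simpa [Real.norm_eq_abs, Real.abs_exp, Real.rpow_one] using h
  have hre : ∀ x : ℝ, ‖φ (x : ℂ)‖ ≤ max M₀ C₁ := by
    intro x
    rw [hφnorm]
    simp only [Complex.ofReal_im, mul_zero, neg_zero, Real.exp_zero, mul_one]
    exact (hreal x).trans (le_max_left _ _)
  have him : ∀ x : ℝ, 0 ≤ x → ‖φ ((x : ℂ) * Complex.I)‖ ≤ max M₀ C₁ := by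
    intro x hx
    rw [hφnorm]
    have him1 : ((x : ℂ) * Complex.I).im = x := by simp
    have hnrm : ‖(x : ℂ) * Complex.I‖ = x := by
      rw [norm_mul, Complex.norm_I, mul_one, Complex.norm_real, Real.norm_eq_abs,
        _root_.abs_of_nonneg hx]
    rw [him1]
    calc ‖F ((x : ℂ) * Complex.I)‖ * Real.exp (-(a * x))
        ≤ (C₁ * Real.exp (b * ‖(x : ℂ) * Complex.I‖)) * Real.exp (-(a * x)) :=
          mul_le_mul_of_nonneg_right (hgrow _) (Real.exp_pos _).le
      _ = C₁ * Real.exp ((b - a) * x) := by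
          rw [hnrm, mul_assoc, ← Real.exp_add]; congr 2; ring
      _ ≤ C₁ * 1 := by
          apply mul_le_mul_of_nonneg_left _ hC₁.le
          apply Real.exp_le_one_iff.2
          have : b - a = -1 := by rw [ha]; ring
          rw [this]; nlinarith
      _ ≤ max M₀ C₁ := by rw [mul_one]; exact le_max_right _ _
  intro z hz
  have hφbound : ‖φ z‖ ≤ max M₀ C₁ := by
    rcases le_or_gt 0 z.re with hre' | hre'
    · exact PhragmenLindelof.quadrant_I (hφd.diffContOnCl)
        ⟨1, one_lt_two, b + a, hBig _⟩ (fun x _ => hre x) him hre' hz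
    · exact PhragmenLindelof.quadrant_II (hφd.diffContOnCl)
        ⟨1, one_lt_two, b + a, hBig _⟩ (fun x _ => hre x) him hre'.le hz
  have := hφnorm z
  rw [this] at hφbound
  have hexp : Real.exp (-(a * z.im)) > 0 := Real.exp_pos _
  calc ‖F z‖ = (‖F z‖ * Real.exp (-(a * z.im))) * Real.exp (a * z.im) := by
        rw [mul_assoc, ← Real.exp_add]; simp
    _ ≤ max M₀ C₁ * Real.exp (a * z.im) :=
        mul_le_mul_of_nonneg_right hφbound (Real.exp_pos _).le
    _ = max M₀ C₁ * Real.exp ((b + 1) * z.im) := by rw [ha]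

/-- Strip bound: an entire function of exponential growth bounded on ℝ is bounded on the
strip `|Im z| ≤ 1`. -/
lemma strip_bound {F : ℂ → ℂ} {b C₁ M₀ : ℝ} (hb : 0 ≤ b) (hC₁ : 0 < C₁)
    (hd : Differentiable ℂ F)
    (hgrow : ∀ z : ℂ, ‖F z‖ ≤ C₁ * Real.exp (b * ‖z‖))
    (hreal : ∀ x : ℝ, ‖F x‖ ≤ M₀) :
    ∀ z : ℂ, |z.im| ≤ 1 → ‖F z‖ ≤ max M₀ C₁ * Real.exp (b + 1) := by
  have key : ∀ (G : ℂ → ℂ), Differentiable ℂ G → (∀ z : ℂ, ‖G z‖ ≤ C₁ * Real.exp (b * ‖z‖)) →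
      (∀ x : ℝ, ‖G x‖ ≤ M₀) → ∀ z : ℂ, 0 ≤ z.im → z.im ≤ 1 →
      ‖G z‖ ≤ max M₀ C₁ * Real.exp (b + 1) := by
    intro G hGd hGgrow hGreal z hz hz1
    have := upper_half_bound hb hC₁ hGd hGgrow hGreal z hz
    calc ‖G z‖ ≤ max M₀ C₁ * Real.exp ((b + 1) * z.im) := this
      _ ≤ max M₀ C₁ * Real.exp (b + 1) := by
        apply mul_le_mul_of_nonneg_left _ _
        · apply Real.exp_le_exp.2; nlinarith
        · have : (0:ℝ) < max M₀ C₁ := lt_max_of_lt_right hC₁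
          exact this.le
  intro z hz
  rcases le_or_gt 0 z.im with him | him
  · exact key F hd hgrow hreal z him (abs_le.1 hz).2
  · have h1 : ‖F z‖ = ‖sharp F ((starRingEnd ℂ) z)‖ := by
      rw [norm_sharp, Complex.conj_conj]
    rw [h1]
    apply key (sharp F) (differentiable_sharp hd) ?_ ?_ _ ?_ ?_
    · intro w
      rw [norm_sharp]
      calc ‖F ((starRingEnd ℂ) w)‖ ≤ C₁ * Real.exp (b * ‖(starRingEnd ℂ) w‖) := hgrow _
        _ = C₁ * Real.exp (b * ‖w‖) := by rw [RCLike.norm_conj]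
    · intro x
      rw [norm_sharp]
      have : (starRingEnd ℂ) (x : ℂ) = (x : ℂ) := Complex.conj_ofReal x
      rw [this]
      exact hreal x
    · simp only [Complex.conj_im]
      linarith
    · simp only [Complex.conj_im]
      have := (abs_le.1 hz).1
      linarith

/-- Key analytic fact: a Paley-Wiener function is bounded on the real axis. -/
lemma pw_bounded {γ : ℝ} {f : ℂ → ℂ} (hγ : 0 < γ) (hf : IsPW γ f) :
    ∃ M : ℝ, ∀ x : ℝ, ‖f x‖ ≤ M := by
  obtain ⟨hdiff, htype, hint⟩ := hf
  have hcont : Continuous f := hdiff.continuous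
  have hdcont : Continuous (deriv f) := (differentiable_deriv hdiff).continuous
  set I : ℝ := ∫ x : ℝ, ‖f x‖ ^ 2 with hIdef
  have hI0 : 0 ≤ I := integral_nonneg fun x => by positivity
  obtain ⟨C, hC, hCb⟩ := htype (1 / 2) one_half_pos
  set b : ℝ := γ + 1 / 2 with hbdef
  have hb0 : 0 ≤ b := by rw [hbdef]; linarith
  set C₁ : ℝ := C * Real.exp b with hC₁def
  have hC₁0 : 0 < C₁ := mul_pos hC (Real.exp_pos _)
  set M₀ : ℝ := (1 + I) / 2 with hM₀def
  set M₃ : ℝ := max M₀ C₁ * Real.exp (b + 1) with hM₃def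
  refine ⟨Real.sqrt I + M₃, fun x₀ => ?_⟩
  -- find a point s in [x₀, x₀+1] where ‖f s‖² ≤ I
  have hIcc : IsCompact (Set.Icc x₀ (x₀ + 1)) := isCompact_Icc
  have hne : (Set.Icc x₀ (x₀ + 1)).Nonempty := Set.nonempty_Icc.2 (by linarith)
  obtain ⟨s, hsmem, hsmin⟩ := hIcc.exists_isMinOn hne
    ((hcont.comp Complex.continuous_ofReal).norm.continuousOn)
  have hsI : ‖f s‖ ^ 2 ≤ I := by
    by_contra hcon
    push_neg at hcon
    have hlow : ∀ u ∈ Set.Ioc x₀ (x₀ + 1), ‖f s‖ ^ 2 ≤ ‖f u‖ ^ 2 := by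
      intro u hu
      have : ‖f s‖ ≤ ‖f u‖ := hsmin (Set.Ioc_subset_Icc_self hu)
      exact pow_le_pow_left₀ (norm_nonneg _) this 2
    have hmeas : MeasurableSet (Set.Ioc x₀ (x₀ + 1)) := measurableSet_Ioc
    have hμ : volume (Set.Ioc x₀ (x₀ + 1)) ≠ ⊤ := by
      rw [Real.volume_Ioc]; exact ENNReal.ofReal_ne_top
    have h1 : ‖f s‖ ^ 2 * (volume (Set.Ioc x₀ (x₀ + 1))).toReal
        ≤ ∫ u in Set.Ioc x₀ (x₀ + 1), ‖f u‖ ^ 2 :=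
      setIntegral_ge_of_const_le_real hmeas hμ hlow (hint.integrableOn)
    have h2 : (volume (Set.Ioc x₀ (x₀ + 1))).toReal = 1 := by
      rw [Real.volume_Ioc]
      norm_num
    have h3 : ∫ u in Set.Ioc x₀ (x₀ + 1), ‖f u‖ ^ 2 ≤ I :=
      setIntegral_le_integral hint (Filter.Eventually.of_forall fun x => by positivity)
    rw [h2, mul_one] at h1
    linarith
  set δ : ℝ := s - x₀ with hδdef
  have hδ0 : 0 ≤ δ := by rw [hδdef]; linarith [hsmem.1]
  have hδ1 : δ ≤ 1 := by rw [hδdef]; linarith [hsmem.2]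
  -- the moving average function
  set h : ℂ → ℂ := fun z => ∫ t in (0:ℝ)..δ, f (z + t) with hhdef
  -- derivative of h
  have hDeriv : ∀ z : ℂ, HasDerivAt h (f (z + δ) - f z) z := by
    intro z₀
    obtain ⟨K, hK⟩ := (isCompact_closedBall z₀ 2).exists_bound_of_continuousOn
      hdcont.continuousOn
    have key := intervalIntegral.hasDerivAt_integral_of_dominated_loc_of_deriv_le
      (F := fun (z : ℂ) (t : ℝ) => f (z + t)) (F' := fun (z : ℂ) (t : ℝ) => deriv f (z + t))
      (x₀ := z₀) (μ := volume) (a := (0:ℝ)) (b := δ) (bound := fun _ => K) (s := Metric.ball z₀ 1) (Metric.ball_mem_nhds z₀ one_pos)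
      ?_ ?_ ?_ ?_ ?_ ?_
    · obtain ⟨hint', hd'⟩ := key
      have heq : ∫ t in (0:ℝ)..δ, deriv f (z₀ + t) = f (z₀ + δ) - f z₀ := by
        have hftc := intervalIntegral.integral_eq_sub_of_hasDerivAt
          (f := fun t : ℝ => f (z₀ + t)) (f' := fun t : ℝ => deriv f (z₀ + t))
          (a := (0:ℝ)) (b := δ) ?_ ?_
        · rw [hftc]
          norm_num
        · intro t _
          have h1 : HasDerivAt f (deriv f (z₀ + (t:ℂ))) (z₀ + (t:ℂ)) :=
            (hdiff _).hasDerivAt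
          have h2 : HasDerivAt (fun w : ℂ => f (z₀ + w)) (deriv f (z₀ + (t:ℂ))) (t:ℂ) := by
            have h3 : HasDerivAt (fun w : ℂ => z₀ + w) 1 (t:ℂ) :=
              (hasDerivAt_id _).const_add z₀
            have h4 := h1.comp (t:ℂ) h3; rw [mul_one] at h4; exact h4
          exact h2.comp_ofReal
        · exact ((hdcont.comp (by continuity)).intervalIntegrable _ _)
      rw [heq] at hd'
      exact hd'
    · filter_upwards with z
      exact ((hcont.comp (continuous_const.add Complex.continuous_ofReal : Continuous fun t : ℝ => z + (t:ℂ)))).aestronglyMeasurable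
    · exact ((hcont.comp (continuous_const.add Complex.continuous_ofReal : Continuous fun t : ℝ => z₀ + (t:ℂ)))).intervalIntegrable _ _
    · exact ((hdcont.comp (continuous_const.add Complex.continuous_ofReal : Continuous fun t : ℝ => z₀ + (t:ℂ)))).aestronglyMeasurable
    · filter_upwards with t ht x hx
      apply hK
      have ht' : t ∈ Set.Ioc 0 δ := by
        rwa [Set.uIoc_of_le hδ0] at ht
      have : ‖x + (t:ℂ) - z₀‖ ≤ ‖x - z₀‖ + ‖(t:ℂ)‖ := by
        have : x + (t:ℂ) - z₀ = (x - z₀) + (t:ℂ) := by ring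
        rw [this]; exact norm_add_le _ _
      have hxd : ‖x - z₀‖ < 1 := by rwa [Metric.mem_ball, dist_eq_norm] at hx
      have htd : ‖(t:ℂ)‖ ≤ 1 := by
        rw [Complex.norm_real, Real.norm_eq_abs, _root_.abs_of_nonneg ht'.1.le]
        linarith [ht'.2]
      rw [Metric.mem_closedBall, dist_eq_norm]
      linarith
    · exact intervalIntegrable_const
    · filter_upwards with t ht x hx
      have h1 : HasDerivAt f (deriv f (x + (t:ℂ))) (x + (t:ℂ)) := (hdiff _).hasDerivAt
      have h3 : HasDerivAt (fun w : ℂ => w + (t:ℂ)) 1 x := (hasDerivAt_id _).add_const _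
      have h4 := h1.comp x h3; rw [mul_one] at h4; exact h4
  have hhd : Differentiable ℂ h := fun z => (hDeriv z).differentiableAt
  -- bound of h on the real axis
  have hhreal : ∀ x : ℝ, ‖h x‖ ≤ M₀ := by
    intro x
    have hb1 : ‖h (x:ℂ)‖ ≤ ∫ t in (0:ℝ)..δ, ‖f ((x:ℂ) + t)‖ :=
      intervalIntegral.norm_integral_le_integral_norm hδ0
    have hb2 : ∫ t in (0:ℝ)..δ, ‖f ((x:ℂ) + t)‖
        ≤ ∫ t in (0:ℝ)..δ, (1 + ‖f ((x:ℂ) + t)‖ ^ 2) / 2 := by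
      apply intervalIntegral.integral_mono_on hδ0
      · exact ((hcont.comp (continuous_const.add Complex.continuous_ofReal : Continuous fun t : ℝ => (x:ℂ) + (t:ℂ))).norm).intervalIntegrable _ _
      · exact (((continuous_const.add ((hcont.comp
            (continuous_const.add Complex.continuous_ofReal)).norm.pow 2))).div_const 2).intervalIntegrable _ _
      · intro t _
        nlinarith [sq_nonneg (1 - ‖f ((x:ℂ) + t)‖), norm_nonneg (f ((x:ℂ) + t))]
    have hb3 : ∫ t in (0:ℝ)..δ, (1 + ‖f ((x:ℂ) + t)‖ ^ 2) / 2
        = δ / 2 + (∫ t in (0:ℝ)..δ, ‖f ((x:ℂ) + t)‖ ^ 2) / 2 := by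
      rw [intervalIntegral.integral_div, intervalIntegral.integral_add]
      · simp only [intervalIntegral.integral_const, smul_eq_mul, mul_one, sub_zero]
        ring
      · exact intervalIntegrable_const
      · exact (((hcont.comp (continuous_const.add
          Complex.continuous_ofReal)).norm.pow 2)).intervalIntegrable _ _
    have hb4 : ∫ t in (0:ℝ)..δ, ‖f ((x:ℂ) + t)‖ ^ 2 ≤ I := by
      have hcast : ∀ t : ℝ, (x:ℂ) + (t:ℂ) = ((x + t : ℝ) : ℂ) := by
        intro t; push_cast; ring
      have : ∫ t in (0:ℝ)..δ, ‖f ((x:ℂ) + t)‖ ^ 2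
          = ∫ t in (0:ℝ)..δ, (fun u : ℝ => ‖f (u:ℂ)‖ ^ 2) (x + t) := by
        apply intervalIntegral.integral_congr
        intro t _
        show ‖f ((x:ℂ) + (t:ℂ))‖ ^ 2 = ‖f (((x + t : ℝ) : ℂ))‖ ^ 2
        rw [hcast t]
      rw [this, intervalIntegral.integral_comp_add_left (fun u : ℝ => ‖f (u:ℂ)‖ ^ 2) x]
      rw [intervalIntegral.integral_of_le (by linarith : x + 0 ≤ x + δ)]
      exact setIntegral_le_integral hint (Filter.Eventually.of_forall fun u => by positivity)
    rw [hM₀def]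
    have := hb1.trans (hb2.trans_eq hb3)
    linarith
  -- growth bound of h
  have hhgrow : ∀ z : ℂ, ‖h z‖ ≤ C₁ * Real.exp (b * ‖z‖) := by
    intro z
    have key : ∀ t ∈ Set.uIoc (0:ℝ) δ, ‖f (z + t)‖ ≤ C * Real.exp (b * (‖z‖ + 1)) := by
      intro t ht
      rw [Set.uIoc_of_le hδ0] at ht
      calc ‖f (z + t)‖ ≤ C * Real.exp ((γ + 1/2) * ‖z + (t:ℂ)‖) := hCb _
        _ ≤ C * Real.exp (b * (‖z‖ + 1)) := by
          apply mul_le_mul_of_nonneg_left _ hC.le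
          apply Real.exp_le_exp.2
          apply mul_le_mul_of_nonneg_left _ hb0
          calc ‖z + (t:ℂ)‖ ≤ ‖z‖ + ‖(t:ℂ)‖ := norm_add_le _ _
            _ ≤ ‖z‖ + 1 := by
              have : ‖(t:ℂ)‖ ≤ 1 := by
                rw [Complex.norm_real, Real.norm_eq_abs, _root_.abs_of_nonneg ht.1.le]
                linarith [ht.2]
              linarith
    have h1 : ‖h z‖ ≤ C * Real.exp (b * (‖z‖ + 1)) * |δ - 0| :=
      intervalIntegral.norm_integral_le_of_norm_le_const key
    have h2 : |δ - 0| ≤ 1 := by rw [sub_zero, _root_.abs_of_nonneg hδ0]; exact hδ1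
    calc ‖h z‖ ≤ C * Real.exp (b * (‖z‖ + 1)) * |δ - 0| := h1
      _ ≤ C * Real.exp (b * (‖z‖ + 1)) * 1 := by
        apply mul_le_mul_of_nonneg_left h2 (by positivity)
      _ = C₁ * Real.exp (b * ‖z‖) := by
        rw [mul_one, hC₁def, mul_assoc, ← Real.exp_add]
        congr 2
        ring
  -- strip bound and Cauchy estimate
  have hstrip := strip_bound hb0 hC₁0 hhd hhgrow hhreal
  have hcauchy : ‖deriv h (x₀:ℂ)‖ ≤ M₃ / 1 := by
    apply Complex.norm_deriv_le_of_forall_mem_sphere_norm_le one_pos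
      (hhd.diffContOnCl)
    intro z hz
    apply hstrip
    have : ‖z - (x₀:ℂ)‖ = 1 := by rwa [Metric.mem_sphere, dist_eq_norm] at hz
    have him : |(z - (x₀:ℂ)).im| ≤ ‖z - (x₀:ℂ)‖ := by
      exact Complex.abs_im_le_norm _
    rw [this] at him
    simpa using him
  have hderiv_eq : deriv h (x₀:ℂ) = f ((x₀:ℂ) + δ) - f x₀ := (hDeriv _).deriv
  rw [hderiv_eq] at hcauchy
  have hcast : (x₀:ℂ) + (δ:ℂ) = ((s:ℝ):ℂ) := by
    rw [hδdef]; push_cast; ring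
  rw [hcast] at hcauchy
  have hfs : ‖f (s:ℂ)‖ ≤ Real.sqrt I := by
    have := Real.sqrt_le_sqrt hsI
    rwa [Real.sqrt_sq (norm_nonneg _)] at this
  calc ‖f (x₀:ℂ)‖ = ‖f (s:ℂ) - (f (s:ℂ) - f (x₀:ℂ))‖ := by congr 1; ring
    _ ≤ ‖f (s:ℂ)‖ + ‖f (s:ℂ) - f (x₀:ℂ)‖ := norm_sub_le _ _
    _ ≤ Real.sqrt I + M₃ := by
      apply add_le_add hfs
      have := hcauchy
      rw [div_one] at this
      exact this

end SamplingAux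

open SamplingAux in
theorem abs_eq_on_real_of_samples (γ : ℝ) (hγ : 0 < γ) (t : ℤ → ℝ)
    (ht : IsSamplingSet (2 * γ) t) (f g : ℂ → ℂ)
    (hf : IsPW γ f) (hg : IsPW γ g)
    (hsamp : ∀ n : ℤ, ‖f (t n)‖ = ‖g (t n)‖) :
    ∀ x : ℝ, ‖f x‖ = ‖g x‖ := by
  obtain ⟨Mf, hMf⟩ := pw_bounded hγ hf
  obtain ⟨Mg, hMg⟩ := pw_bounded hγ hg
  obtain ⟨hfd, hft, hfi⟩ := hf
  obtain ⟨hgd, hgt, hgi⟩ := hg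
  set F : ℂ → ℂ := fun z => f z * sharp f z - g z * sharp g z with hFdef
  have hFreal : ∀ x : ℝ, F (x:ℂ) = ((‖f (x:ℂ)‖ ^ 2 : ℝ) : ℂ) - ((‖g (x:ℂ)‖ ^ 2 : ℝ) : ℂ) := by
    intro x
    rw [hFdef]
    simp only [sharp, Complex.conj_ofReal]
    rw [Complex.mul_conj, Complex.mul_conj]
    congr 2 <;> rw [Complex.normSq_eq_norm_sq]
  have hFd : Differentiable ℂ F :=
    (hfd.mul (differentiable_sharp hfd)).sub (hgd.mul (differentiable_sharp hgd))
  have hFt : ExpType (2 * γ) F := by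
    have h1 : ExpType (γ + γ) fun z => f z * sharp f z :=
      expType_mul hft (expType_sharp hft)
    have h2 : ExpType (γ + γ) fun z => g z * sharp g z :=
      expType_mul hgt (expType_sharp hgt)
    have := expType_sub h1 h2
    rwa [← two_mul] at this
  have hFnorm : ∀ x : ℝ, ‖F (x:ℂ)‖ ≤ ‖f (x:ℂ)‖ ^ 2 + ‖g (x:ℂ)‖ ^ 2 := by
    intro x
    rw [hFreal x]
    calc ‖((‖f (x:ℂ)‖ ^ 2 : ℝ) : ℂ) - ((‖g (x:ℂ)‖ ^ 2 : ℝ) : ℂ)‖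
        ≤ ‖((‖f (x:ℂ)‖ ^ 2 : ℝ) : ℂ)‖ + ‖((‖g (x:ℂ)‖ ^ 2 : ℝ) : ℂ)‖ := norm_sub_le _ _
      _ = ‖f (x:ℂ)‖ ^ 2 + ‖g (x:ℂ)‖ ^ 2 := by
        rw [Complex.norm_real, Complex.norm_real, Real.norm_eq_abs, Real.norm_eq_abs,
          _root_.abs_of_nonneg (by positivity : (0:ℝ) ≤ ‖f (x:ℂ)‖ ^ 2),
          _root_.abs_of_nonneg (by positivity : (0:ℝ) ≤ ‖g (x:ℂ)‖ ^ 2)]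
  have hFi : Integrable (fun x : ℝ => ‖F (x:ℂ)‖ ^ 2) := by
    apply Integrable.mono' (((hfi.add hgi).const_mul (Mf ^ 2 + Mg ^ 2)))
    · exact ((hFd.continuous.comp Complex.continuous_ofReal).norm.pow 2).aestronglyMeasurable
    · filter_upwards with x
      rw [Real.norm_eq_abs, _root_.abs_of_nonneg (by positivity : (0:ℝ) ≤ ‖F (x:ℂ)‖ ^ 2)]
      have h1 := hFnorm x
      have h2 : ‖f (x:ℂ)‖ ≤ Mf := hMf x
      have h3 : ‖g (x:ℂ)‖ ≤ Mg := hMg x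
      have h4 : (0:ℝ) ≤ ‖f (x:ℂ)‖ := norm_nonneg _
      have h5 : (0:ℝ) ≤ ‖g (x:ℂ)‖ := norm_nonneg _
      have h6 : (0:ℝ) ≤ ‖F (x:ℂ)‖ := norm_nonneg _
      have ha : ‖f (x:ℂ)‖ ^ 2 ≤ Mf ^ 2 := by nlinarith
      have hb : ‖g (x:ℂ)‖ ^ 2 ≤ Mg ^ 2 := by nlinarith
      simp only [Pi.add_apply]
      calc ‖F (x:ℂ)‖ ^ 2 ≤ (‖f (x:ℂ)‖ ^ 2 + ‖g (x:ℂ)‖ ^ 2) ^ 2 := by nlinarith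
        _ ≤ (Mf ^ 2 + Mg ^ 2) * (‖f (x:ℂ)‖ ^ 2 + ‖g (x:ℂ)‖ ^ 2) := by nlinarith
  have hFPW : IsPW (2 * γ) F := ⟨hFd, hFt, hFi⟩
  obtain ⟨A, B, hA, hB, hAB⟩ := ht
  have hsum : (∑' n : ℤ, ‖F (t n)‖ ^ 2) = 0 := by
    have : ∀ n : ℤ, ‖F ((t n : ℝ):ℂ)‖ ^ 2 = 0 := by
      intro n
      rw [hFreal (t n), hsamp n]
      simp
    rw [tsum_congr this, tsum_zero]
  have hineq := (hAB F hFPW).1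
  rw [hsum] at hineq
  have hint_nonneg : 0 ≤ ∫ x : ℝ, ‖F (x:ℂ)‖ ^ 2 := integral_nonneg fun x => by positivity
  have hint_zero : ∫ x : ℝ, ‖F (x:ℂ)‖ ^ 2 = 0 := by
    nlinarith
  have hae : (fun x : ℝ => ‖F (x:ℂ)‖ ^ 2) =ᵐ[volume] 0 := by
    rw [← MeasureTheory.integral_eq_zero_iff_of_nonneg (fun x => by positivity) hFi]
    exact hint_zero
  have hzero : ∀ x : ℝ, ‖F (x:ℂ)‖ ^ 2 = 0 := by
    have hcont : Continuous fun x : ℝ => ‖F (x:ℂ)‖ ^ 2 :=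
      (hFd.continuous.comp Complex.continuous_ofReal).norm.pow 2
    have := (hcont.ae_eq_iff_eq volume continuous_const).1 hae
    intro x
    exact congrFun this x
  intro x
  have hFx : F (x:ℂ) = 0 := by
    have := hzero x
    have h2 : ‖F (x:ℂ)‖ = 0 := by nlinarith [norm_nonneg (F (x:ℂ))]
    exact norm_eq_zero.1 h2
  rw [hFreal x, sub_eq_zero] at hFx
  have : (‖f (x:ℂ)‖ ^ 2 : ℝ) = ‖g (x:ℂ)‖ ^ 2 := by exact_mod_cast hFx
  calc ‖f (x:ℂ)‖ = Real.sqrt (‖f (x:ℂ)‖ ^ 2) := (Real.sqrt_sq (norm_nonneg _)).symm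
    _ = Real.sqrt (‖g (x:ℂ)‖ ^ 2) := by rw [this]
    _ = ‖g (x:ℂ)‖ := Real.sqrt_sq (norm_nonneg _)
end
end

section
/- Suppose f and g are entire functions with f·f^♯ = g·g^♯ and f′·(f′)^♯ = g′·(g′)^♯ identically. Then there exists a unimodular scalar λ ∈ ℂ such that either f = λg or f = λg^♯. -/
noncomputable section
open MeasureTheory Complex Filter Topology

open Metric

lemma sharp_sharp (f : ℂ → ℂ) (z : ℂ) : sharp (sharp f) z = f z := by
  simp [sharp]

lemma hasDerivAt_sharp {f : ℂ → ℂ} {c : ℂ} (z : ℂ)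
    (h : HasDerivAt f c ((starRingEnd ℂ) z)) :
    HasDerivAt (sharp f) ((starRingEnd ℂ) c) z := by
  rw [hasDerivAt_iff_tendsto_slope] at h ⊢
  have hconj : Tendsto (starRingEnd ℂ) (𝓝[≠] z) (𝓝[≠] ((starRingEnd ℂ) z)) := by
    apply tendsto_nhdsWithin_of_tendsto_nhds_of_eventually_within
    · exact (Complex.continuous_conj.tendsto z).mono_left nhdsWithin_le_nhds
    · filter_upwards [self_mem_nhdsWithin] with w hw
      simp only [Set.mem_compl_iff, Set.mem_singleton_iff] at hw ⊢
      intro hc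
      exact hw (by simpa using congrArg (starRingEnd ℂ) hc)
  have := (Complex.continuous_conj.tendsto c).comp (h.comp hconj)
  refine this.congr (fun w => ?_)
  simp only [Function.comp_apply, slope_def_field, sharp, map_div₀, map_sub]
  simp

lemma Differentiable.sharp' {f : ℂ → ℂ} (hf : Differentiable ℂ f) :
    Differentiable ℂ (sharp f) := fun z =>
  (hasDerivAt_sharp z (hf ((starRingEnd ℂ) z)).hasDerivAt).differentiableAt

lemma deriv_sharp {f : ℂ → ℂ} (hf : Differentiable ℂ f) (z : ℂ) :
    deriv (sharp f) z = sharp (deriv f) z :=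
  (hasDerivAt_sharp z (hf ((starRingEnd ℂ) z)).hasDerivAt).deriv

lemma entire_mul_eq_zero {p q : ℂ → ℂ} (hp : Differentiable ℂ p) (hq : Differentiable ℂ q)
    (h : ∀ z, p z * q z = 0) : (∀ z, p z = 0) ∨ (∀ z, q z = 0) := by
  by_contra hc
  push_neg at hc
  obtain ⟨⟨z₁, hz₁⟩, z₂, hz₂⟩ := hc
  have hev : q =ᶠ[𝓝 z₁] 0 := by
    filter_upwards [(hp.continuous.continuousAt).eventually_ne hz₁] with w hw
    exact (mul_eq_zero.1 (h w)).resolve_left hw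
  have : Set.EqOn q 0 Set.univ :=
    AnalyticOnNhd.eqOn_zero_of_preconnected_of_eventuallyEq_zero
      (fun z _ => hq.analyticAt z) isPreconnected_univ (Set.mem_univ z₁) hev
  exact hz₂ (this (Set.mem_univ z₂))

lemma eq_smul_of_wronskian {p q : ℂ → ℂ} (hp : Differentiable ℂ p) (hq : Differentiable ℂ q)
    (hw : ∀ z, deriv p z * q z = p z * deriv q z) {z₀ : ℂ} (hz₀ : q z₀ ≠ 0) :
    ∀ z, p z = (p z₀ / q z₀) * q z := by
  have hopen : IsOpen {z : ℂ | q z ≠ 0} :=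
    (isOpen_compl_singleton).preimage hq.continuous
  obtain ⟨r, hr, hball⟩ := Metric.isOpen_iff.1 hopen z₀ hz₀
  set c := p z₀ / q z₀ with hc
  have hφconst : ∀ x ∈ ball z₀ r, p x / q x = c := by
    intro x hx
    have hdiff : DifferentiableOn ℂ (fun z => p z / q z) (ball z₀ r) :=
      hp.differentiableOn.div hq.differentiableOn (fun z hz => hball hz)
    have hder : ∀ x ∈ ball z₀ r, fderivWithin ℂ (fun z => p z / q z) (ball z₀ r) x = 0 := by
      intro x hx
      have hqx : q x ≠ 0 := hball hx
      have hd : HasDerivAt (fun z => p z / q z)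
          ((deriv p x * q x - p x * deriv q x) / q x ^ 2) x :=
        (hp x).hasDerivAt.div (hq x).hasDerivAt hqx
      rw [hw x, sub_self, zero_div] at hd
      rw [fderivWithin_of_isOpen isOpen_ball hx, hd.hasFDerivAt.fderiv]
      exact ContinuousLinearMap.ext fun y => by simp
    exact (convex_ball z₀ r).is_const_of_fderivWithin_eq_zero hdiff hder hx
      (mem_ball_self hr)
  have hev : (fun z => p z - c * q z) =ᶠ[𝓝 z₀] 0 := by
    filter_upwards [isOpen_ball.mem_nhds (mem_ball_self hr)] with x hx
    have hqx : q x ≠ 0 := hball hx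
    have := hφconst x hx
    field_simp at this
    simp [this, mul_comm]
  have : Set.EqOn (fun z => p z - c * q z) 0 Set.univ :=
    AnalyticOnNhd.eqOn_zero_of_preconnected_of_eventuallyEq_zero
      (fun z _ => ((hp.sub (hq.const_mul c)).analyticAt z)) isPreconnected_univ
      (Set.mem_univ z₀) hev
  intro z
  simpa [sub_eq_zero] using this (Set.mem_univ z)

lemma norm_one_of_mul_conj {l : ℂ} (h : l * (starRingEnd ℂ) l = 1) : ‖l‖ = 1 := by
  have h2 : (Complex.normSq l : ℂ) = 1 := by rw [← Complex.mul_conj]; exact h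
  have h3 : Complex.normSq l = 1 := by exact_mod_cast h2
  have h4 : ‖l‖ ^ 2 = 1 := by
    rw [Complex.sq_norm]
    exact h3
  nlinarith [norm_nonneg l]

theorem cpr_of_sharp_products (f g : ℂ → ℂ)
    (hf : Differentiable ℂ f) (hg : Differentiable ℂ g)
    (h1 : ∀ z : ℂ, f z * sharp f z = g z * sharp g z)
    (h2 : ∀ z : ℂ, deriv f z * sharp (deriv f) z = deriv g z * sharp (deriv g) z) :
    ∃ lam : ℂ, ‖lam‖ = 1 ∧
      ((∀ z : ℂ, f z = lam * g z) ∨ (∀ z : ℂ, f z = lam * sharp g z)) := by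
  by_cases hg0 : ∀ z, g z = 0
  · -- g ≡ 0, hence f ≡ 0
    have hf0 : ∀ z, f z * sharp f z = 0 := by
      intro z; rw [h1 z, hg0 z, zero_mul]
    have : (∀ z, f z = 0) ∨ (∀ z, sharp f z = 0) :=
      entire_mul_eq_zero hf hf.sharp' hf0
    have hfz : ∀ z, f z = 0 := by
      rcases this with h | h
      · exact h
      · intro z
        have := h ((starRingEnd ℂ) z)
        simp only [sharp, Complex.conj_conj] at this
        simpa using congrArg (starRingEnd ℂ) this
    exact ⟨1, by simp, Or.inl fun z => by rw [hfz z, hg0 z, mul_zero]⟩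
  · push_neg at hg0
    obtain ⟨z₀, hz₀⟩ := hg0
    -- g * sharp g is not identically zero
    have hgs : ¬∀ z, sharp g z = 0 := by
      intro h
      have := h ((starRingEnd ℂ) z₀)
      simp only [sharp, Complex.conj_conj] at this
      exact hz₀ (by simpa using congrArg (starRingEnd ℂ) this)
    have hggs : ∃ w, g w * sharp g w ≠ 0 := by
      by_contra h
      push_neg at h
      rcases entire_mul_eq_zero hg hg.sharp' h with h' | h'
      · exact hz₀ (h' z₀)
      · exact hgs h'
    obtain ⟨w, hw⟩ := hggs
    have hgw : g w ≠ 0 := fun h => hw (by rw [h, zero_mul])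
    have hgsw : sharp g w ≠ 0 := fun h => hw (by rw [h, mul_zero])
    have hfw : f w ≠ 0 := by
      intro h
      exact hw (by rw [← h1 w, h, zero_mul])
    have hfsw : sharp f w ≠ 0 := by
      intro h
      exact hw (by rw [← h1 w, h, mul_zero])
    have hfsne : ¬∀ z, sharp f z = 0 := fun h => hfsw (h w)
    -- derivative of h1
    have hsum : ∀ z, deriv f z * sharp f z + f z * sharp (deriv f) z
        = deriv g z * sharp g z + g z * sharp (deriv g) z := by
      intro z
      have e : deriv (fun y => f y * sharp f y) z = deriv (fun y => g y * sharp g y) z := by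
        congr 1; funext y; exact h1 y
      rw [deriv_fun_mul (hf z) (hf.sharp' z), deriv_fun_mul (hg z) (hg.sharp' z),
        deriv_sharp hf, deriv_sharp hg] at e
      exact e
    -- (c-a)(c-b) = 0
    have hquad : ∀ z, (deriv g z * sharp g z - deriv f z * sharp f z) *
        (deriv g z * sharp g z - f z * sharp (deriv f) z) = 0 := by
      intro z
      have e1 := hsum z
      have e2 : (deriv f z * sharp f z) * (f z * sharp (deriv f) z)
          = (deriv g z * sharp g z) * (g z * sharp (deriv g) z) := by
        linear_combination (deriv f z * sharp (deriv f) z) * h1 z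
          + (g z * sharp g z) * h2 z
      linear_combination (-(deriv g z * sharp g z)) * e1 + e2
    have hfa : AnalyticOnNhd ℂ f Set.univ := fun y _ => hf.analyticAt y
    have hga : AnalyticOnNhd ℂ g Set.univ := fun y _ => hg.analyticAt y
    have hfd : Differentiable ℂ (deriv f) := fun z =>
      (hfa.deriv z (Set.mem_univ z)).differentiableAt
    have hgd : Differentiable ℂ (deriv g) := fun z =>
      (hga.deriv z (Set.mem_univ z)).differentiableAt
    have hAd : Differentiable ℂ (fun z => deriv g z * sharp g z - deriv f z * sharp f z) :=
      ((hgd.mul hg.sharp').sub (hfd.mul hf.sharp'))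
    have hBd : Differentiable ℂ (fun z => deriv g z * sharp g z - f z * sharp (deriv f) z) :=
      ((hgd.mul hg.sharp').sub (hf.mul hfd.sharp'))
    rcases entire_mul_eq_zero hAd hBd hquad with hca | hcb
    · -- Case 1 : g' g♯ = f' f♯  ⇒ f = λ g
      have hwz : ∀ z, sharp f z * (deriv f z * g z - f z * deriv g z) = 0 := by
        intro z
        have e1 := sub_eq_zero.1 (hca z)
        have e2 := h1 z
        linear_combination (-(g z)) * e1 + (-(deriv g z)) * e2
      have hwr : ∀ z, deriv f z * g z = f z * deriv g z := by
        rcases entire_mul_eq_zero hf.sharp'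
          ((hfd.mul hg).sub (hf.mul hgd)) hwz with h' | h'
        · exact absurd h' hfsne
        · exact fun z => sub_eq_zero.1 (h' z)
      set lam := f w / g w with hlam
      have heq : ∀ z, f z = lam * g z := eq_smul_of_wronskian hf hg hwr hgw
      have hsf : ∀ z, sharp f z = (starRingEnd ℂ) lam * sharp g z := by
        intro z
        simp only [sharp, heq ((starRingEnd ℂ) z), map_mul]
      have hll : lam * (starRingEnd ℂ) lam = 1 := by
        have := h1 w
        rw [heq w, hsf w] at this
        have h' : (lam * (starRingEnd ℂ) lam) * (g w * sharp g w) = 1 * (g w * sharp g w) := by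
          linear_combination this
        exact mul_right_cancel₀ hw h'
      exact ⟨lam, norm_one_of_mul_conj hll, Or.inl heq⟩
    · -- Case 2 : g' g♯ = f (f')♯ ⇒ f = λ g♯
      -- conjugate-reflect the identity
      have hcb' : ∀ z, deriv f z * sharp f z = g z * sharp (deriv g) z := by
        intro z
        have e := sub_eq_zero.1 (hcb ((starRingEnd ℂ) z))
        have e' := congrArg (starRingEnd ℂ) e
        simp only [map_mul, sharp, Complex.conj_conj] at e' ⊢
        linear_combination -e'
      have hwz : ∀ z, sharp f z * (deriv f z * sharp g z - f z * sharp (deriv g) z) = 0 := by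
        intro z
        have e1 := hcb' z
        have e2 := h1 z
        linear_combination sharp g z * e1 + (-(sharp (deriv g) z)) * e2
      have hwr : ∀ z, deriv f z * sharp g z = f z * deriv (sharp g) z := by
        rcases entire_mul_eq_zero hf.sharp'
          ((hfd.mul hg.sharp').sub (hf.mul hgd.sharp')) hwz with h' | h'
        · exact absurd h' hfsne
        · intro z
          rw [deriv_sharp hg]
          exact sub_eq_zero.1 (h' z)
      set lam := f w / sharp g w with hlam
      have heq : ∀ z, f z = lam * sharp g z := eq_smul_of_wronskian hf hg.sharp' hwr hgsw
      have hsf : ∀ z, sharp f z = (starRingEnd ℂ) lam * g z := by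
        intro z
        have := heq ((starRingEnd ℂ) z)
        simp only [sharp, Complex.conj_conj] at this ⊢
        rw [this, map_mul, Complex.conj_conj]
      have hll : lam * (starRingEnd ℂ) lam = 1 := by
        have e := h1 w
        rw [heq w, hsf w] at e
        have h' : (lam * (starRingEnd ℂ) lam) * (g w * sharp g w) = 1 * (g w * sharp g w) := by
          linear_combination e
        exact mul_right_cancel₀ hw h'
      exact ⟨lam, norm_one_of_mul_conj hll, Or.inr heq⟩
end
end

section
/- Three vectors v₁ = (a₁, a₂), v₂ = (b₁, b₂), v₃ = (c₁, c₂) in ℝ² ⊂ ℂ² do conjugate phase retrieval in ℂ² (i.e., |⟨x, vⱼ⟩| = |⟨y, vⱼ⟩| for j = 1,2,3 implies x = e^{iθ}y or x = e^{iθ}·conj(y)) if and only if the 3×3 determinant det[[a₁², 2a₁a₂, a₂²], [b₁², 2b₁b₂, b₂²], [c₁², 2c₁c₂, c₂²]] is nonzero. -/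
noncomputable section
open MeasureTheory Complex Filter Topology

/-!
For `x ∈ ℂ²` and real `(a, b)`, `|a x₀ + b x₁|² = a² |x₀|² + 2ab Re (x₀ x̄₁) + b² |x₁|²`, so the
three measurements are the image under the displayed matrix of the moment vector
`moments x = (|x₀|², Re (x₀ x̄₁), |x₁|²)`. Two vectors have the same moments exactly when they
agree up to a global phase and possibly a conjugation, and differences of moment vectors fill
all of `ℝ³` (the moments of `ℂ²` form the cone `p, r ≥ 0, q² ≤ p r`, which has nonempty
interior). Hence conjugate phase retrieval holds iff the matrix has trivial kernel.
-/

open ComplexConjugate Matrix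

def moments (x : Fin 2 → ℂ) : Fin 3 → ℝ :=
  ![normSq (x 0), (x 0 * conj (x 1)).re, normSq (x 1)]

lemma normSq_mul_ofReal_add_mul_ofReal (z w : ℂ) (a b : ℝ) :
    normSq (z * a + w * b) = a ^ 2 * normSq z + 2 * a * b * (z * conj w).re + b ^ 2 * normSq w := by
  simp only [normSq_apply, add_re, add_im, mul_re, mul_im, ofReal_re, ofReal_im, conj_re, conj_im]
  ring

lemma sq_norm_mul_ofReal_add_mul_ofReal (x : Fin 2 → ℂ) (a b : ℝ) :
    ‖x 0 * a + x 1 * b‖ ^ 2 = ![a ^ 2, 2 * a * b, b ^ 2] ⬝ᵥ moments x := by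
  rw [Complex.sq_norm, normSq_mul_ofReal_add_mul_ofReal]
  simp only [moments, dotProduct, Fin.sum_univ_three]
  rfl

lemma norm_mul_ofReal_add_mul_ofReal_eq_iff (x y : Fin 2 → ℂ) (a b : ℝ) :
    ‖x 0 * a + x 1 * b‖ = ‖y 0 * a + y 1 * b‖ ↔
      ![a ^ 2, 2 * a * b, b ^ 2] ⬝ᵥ moments x = ![a ^ 2, 2 * a * b, b ^ 2] ⬝ᵥ moments y := by
  rw [← sq_eq_sq₀ (norm_nonneg _) (norm_nonneg _), sq_norm_mul_ofReal_add_mul_ofReal,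
    sq_norm_mul_ofReal_add_mul_ofReal]

lemma exists_eq_exp_mul_of_norm_eq {z w : ℂ} (h : ‖z‖ = ‖w‖) :
    ∃ θ : ℝ, z = exp (θ * I) * w := by
  refine ⟨arg (z / w), ?_⟩
  rcases eq_or_ne w 0 with rfl | hw
  · simpa using h
  · have hzw : ‖z / w‖ = 1 := by rw [norm_div, h, div_self (norm_ne_zero_iff.mpr hw)]
    have := norm_mul_exp_arg_mul_I (z / w)
    rw [hzw, ofReal_one, one_mul] at this
    rw [this, div_mul_cancel₀ _ hw]

lemma normSq_exp_ofReal_mul_I (θ : ℝ) : normSq (exp (θ * I)) = 1 := by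
  rw [normSq_eq_norm_sq, norm_exp_ofReal_mul_I, one_pow]

lemma exp_ofReal_mul_I_mul_conj (θ : ℝ) : exp (θ * I) * conj (exp (θ * I)) = 1 := by
  rw [mul_conj, normSq_exp_ofReal_mul_I, ofReal_one]

lemma eq_or_eq_conj_of_normSq_eq_of_re_eq {z w : ℂ} (hn : normSq z = normSq w)
    (hre : z.re = w.re) : z = w ∨ z = conj w := by
  rw [normSq_apply, normSq_apply] at hn
  have him : (z.im - w.im) * (z.im + w.im) = 0 := by
    linear_combination hn - (z.re + w.re) * hre
  rcases mul_eq_zero.mp him with h | h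
  · exact Or.inl (Complex.ext hre (by linarith))
  · exact Or.inr (Complex.ext (by simpa using hre) (by rw [conj_im]; linarith))

lemma moments_exp_mul (θ : ℝ) (y : Fin 2 → ℂ) :
    moments (fun i => exp (θ * I) * y i) = moments y := by
  have hconj : exp (θ * I) * y 0 * conj (exp (θ * I) * y 1) = y 0 * conj (y 1) := by
    rw [map_mul]
    linear_combination y 0 * conj (y 1) * exp_ofReal_mul_I_mul_conj θ
  simp only [moments, normSq_mul, normSq_exp_ofReal_mul_I, one_mul, hconj]

lemma moments_conj (y : Fin 2 → ℂ) : moments (fun i => conj (y i)) = moments y := by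
  simp [moments]

lemma exists_eq_exp_mul_of_mul_conj_eq {x y : Fin 2 → ℂ} (h0 : ‖x 0‖ = ‖y 0‖)
    (h1 : ‖x 1‖ = ‖y 1‖) (h : x 0 * conj (x 1) = y 0 * conj (y 1)) :
    ∃ θ : ℝ, ∀ i, x i = exp (θ * I) * y i := by
  rcases eq_or_ne (y 0) 0 with hy0 | hy0
  · obtain ⟨θ, hθ⟩ := exists_eq_exp_mul_of_norm_eq h1
    refine ⟨θ, Fin.forall_fin_two.mpr ⟨?_, hθ⟩⟩
    rw [hy0, mul_zero, ← norm_eq_zero, h0, hy0, norm_zero]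
  · obtain ⟨θ, hθ⟩ := exists_eq_exp_mul_of_norm_eq h0
    refine ⟨θ, Fin.forall_fin_two.mpr ⟨hθ, ?_⟩⟩
    have hc : exp (θ * I) * conj (x 1) = conj (y 1) :=
      mul_left_cancel₀ hy0 (by linear_combination h - conj (x 1) * hθ)
    have hc' := congrArg conj hc
    rw [map_mul, conj_conj, conj_conj] at hc'
    linear_combination exp (θ * I) * hc' - x 1 * exp_ofReal_mul_I_mul_conj θ

lemma exists_phase_iff_moments_eq (x y : Fin 2 → ℂ) :
    (∃ θ : ℝ, (∀ i, x i = exp (θ * I) * y i) ∨ (∀ i, x i = exp (θ * I) * conj (y i))) ↔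
      moments x = moments y := by
  constructor
  · rintro ⟨θ, h | h⟩
    · rw [funext h, moments_exp_mul]
    · rw [funext h, moments_exp_mul, moments_conj]
  · intro h
    have h0 : normSq (x 0) = normSq (y 0) := congrFun h 0
    have hre : (x 0 * conj (x 1)).re = (y 0 * conj (y 1)).re := congrFun h 1
    have h1 : normSq (x 1) = normSq (y 1) := congrFun h 2
    have hn0 : ‖x 0‖ = ‖y 0‖ := by rw [norm_def, norm_def, h0]
    have hn1 : ‖x 1‖ = ‖y 1‖ := by rw [norm_def, norm_def, h1]
    have hprod : normSq (x 0 * conj (x 1)) = normSq (y 0 * conj (y 1)) := by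
      simp only [normSq_mul, normSq_conj, h0, h1]
    rcases eq_or_eq_conj_of_normSq_eq_of_re_eq hprod hre with hc | hc
    · obtain ⟨θ, hθ⟩ := exists_eq_exp_mul_of_mul_conj_eq hn0 hn1 hc
      exact ⟨θ, Or.inl hθ⟩
    · -- the conjugate case is the first case for `conj ∘ y`
      rw [map_mul, conj_conj] at hc
      obtain ⟨θ, hθ⟩ := exists_eq_exp_mul_of_mul_conj_eq (x := x) (y := fun i => conj (y i))
        (by rwa [norm_conj]) (by rwa [norm_conj]) (by rwa [conj_conj])
      exact ⟨θ, Or.inr hθ⟩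

lemma exists_moments_eq {p q r : ℝ} (hp : 0 < p) (hq : q ^ 2 ≤ p * r) :
    ∃ x, moments x = ![p, q, r] := by
  set t := √p
  set s := √(p * r - q ^ 2)
  have ht : t ^ 2 = p := Real.sq_sqrt hp.le
  have hs : s ^ 2 = p * r - q ^ 2 := Real.sq_sqrt (by linarith)
  have ht0 : (t : ℂ) ≠ 0 := ofReal_ne_zero.mpr (Real.sqrt_pos.mpr hp).ne'
  refine ⟨![t, (q + s * I) / t], ?_⟩
  have hx0 : normSq t = p := by rw [normSq_ofReal, ← sq, ht]
  have hx01 : (t : ℂ) * conj ((q + s * I) / t) = q - s * I := by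
    rw [map_div₀, conj_ofReal, mul_div_cancel₀ _ ht0, map_add, map_mul, conj_I, conj_ofReal,
      conj_ofReal]
    ring
  have hx1 : normSq ((q + s * I) / t) = r := by
    rw [normSq_div, normSq_add_mul_I, hx0]
    field_simp
    linarith
  change ![normSq t, ((t : ℂ) * conj ((q + s * I) / t)).re, normSq ((q + s * I) / t)] = _
  rw [hx0, hx01, hx1, sub_re, ofReal_re, re_ofReal_mul, I_re, mul_zero, sub_zero]

lemma exists_moments_sub_eq (k : Fin 3 → ℝ) : ∃ x y, moments x - moments y = k := by
  set P := |k 0| + |k 2| + k 1 ^ 2 + 1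
  have h0 : k 1 ^ 2 + 1 ≤ P + k 0 := by linarith [neg_abs_le (k 0), abs_nonneg (k 2)]
  have h2 : 1 ≤ P + k 2 := by linarith [neg_abs_le (k 2), abs_nonneg (k 0), sq_nonneg (k 1)]
  obtain ⟨x, hx⟩ := exists_moments_eq (p := P + k 0) (q := k 1) (r := P + k 2)
    (by linarith [sq_nonneg (k 1)]) (by nlinarith)
  obtain ⟨y, hy⟩ := exists_moments_eq (p := P) (q := 0) (r := P) (by positivity)
    (by simpa using mul_self_nonneg P)
  refine ⟨x, y, ?_⟩
  rw [hx, hy]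
  ext i
  fin_cases i <;> simp

lemma forall_moments_eq_iff_det_ne_zero (M : Matrix (Fin 3) (Fin 3) ℝ) :
    (∀ x y, M *ᵥ moments x = M *ᵥ moments y → moments x = moments y) ↔ M.det ≠ 0 := by
  rw [← isUnit_iff_ne_zero, ← isUnit_iff_isUnit_det, ← mulVec_injective_iff_isUnit]
  refine ⟨fun h u v huv => ?_, fun h x y => @h _ _⟩
  obtain ⟨x, y, hxy⟩ := exists_moments_sub_eq (u - v)
  have hM : M *ᵥ moments x = M *ᵥ moments y := by
    rw [← sub_eq_zero, ← mulVec_sub, hxy, mulVec_sub, huv, sub_self]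
  rw [← sub_eq_zero, ← hxy, h x y hM, sub_self]

theorem cpr_two_dim_iff_det (a₁ a₂ b₁ b₂ c₁ c₂ : ℝ) :
    (∀ x y : Fin 2 → ℂ,
      ‖x 0 * (a₁ : ℂ) + x 1 * (a₂ : ℂ)‖ = ‖y 0 * (a₁ : ℂ) + y 1 * (a₂ : ℂ)‖ →
      ‖x 0 * (b₁ : ℂ) + x 1 * (b₂ : ℂ)‖ = ‖y 0 * (b₁ : ℂ) + y 1 * (b₂ : ℂ)‖ →
      ‖x 0 * (c₁ : ℂ) + x 1 * (c₂ : ℂ)‖ = ‖y 0 * (c₁ : ℂ) + y 1 * (c₂ : ℂ)‖ →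
      ∃ θ : ℝ, (∀ i, x i = Complex.exp (θ * Complex.I) * y i) ∨
        (∀ i, x i = Complex.exp (θ * Complex.I) * (starRingEnd ℂ) (y i)))
    ↔ Matrix.det !![a₁ ^ 2, 2 * a₁ * a₂, a₂ ^ 2;
                    b₁ ^ 2, 2 * b₁ * b₂, b₂ ^ 2;
                    c₁ ^ 2, 2 * c₁ * c₂, c₂ ^ 2] ≠ 0 := by
  rw [← forall_moments_eq_iff_det_ne_zero]
  refine forall₂_congr fun x y => ?_
  rw [exists_phase_iff_moments_eq, norm_mul_ofReal_add_mul_ofReal_eq_iff,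
    norm_mul_ofReal_add_mul_ofReal_eq_iff, norm_mul_ofReal_add_mul_ofReal_eq_iff,
    funext_iff (f := _ *ᵥ moments x)]
  simp only [Fin.forall_fin_succ, IsEmpty.forall_iff, and_true, and_imp]
  exact Iff.rfl
end
end

section
/- The 3×6 real matrix V = [[1,0,0,1,1,0],[0,1,0,−1,0,1],[0,0,1,0,−1,−1]] has columns that do conjugate phase retrieval on ℂ³: if x, y ∈ ℂ³ satisfy |⟨x, vⱼ⟩| = |⟨y, vⱼ⟩| for all six columns vⱼ, then x = e^{iθ}y or x = e^{iθ}·conj(y) for some θ ∈ ℝ. -/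
noncomputable section
open MeasureTheory Complex Filter Topology

/-- The columns of the matrix `V` from Equation (10) of the paper, as vectors in `ℂ³`. -/
def Vcols : Fin 6 → Fin 3 → ℂ :=
  ![![1, 0, 0], ![0, 1, 0], ![0, 0, 1], ![1, -1, 0], ![1, 0, -1], ![0, 1, -1]]

/-!
The measurements against `e_i` and `e_i - e_j` give `|x_i|` and, by polarization, `Re (x_i x̄_j)`;
since also `|x_i x̄_j| = |x_i| |x_j|`, each Gram entry `x_i x̄_j` is `y_i ȳ_j` or its conjugate.
If every `y_i ȳ_j` is real the two choices agree. Otherwise a cocycle identity forces the same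
choice for all pairs, and a Gram column `x_i x̄_k = y_i ȳ_k` with `y_k ≠ 0` determines `x` up to a
unimodular factor.
-/

open ComplexConjugate

namespace Complex

lemma eq_or_eq_conj_of_re_eq_of_norm_eq {z w : ℂ} (hre : z.re = w.re) (hnorm : ‖z‖ = ‖w‖) :
    z = w ∨ z = conj w := by
  have him : z.im ^ 2 = w.im ^ 2 := by
    rw [← sq_norm_sub_sq_re, ← sq_norm_sub_sq_re, hnorm, hre]
  rcases sq_eq_sq_iff_eq_or_eq_neg.mp him with him | him
  · exact Or.inl (ext hre him)
  · exact Or.inr (ext (by simpa using hre) (by simpa using him))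

lemma mul_conj_eq_or_eq_conj_of_norm_sub_eq {a b c d : ℂ} (ha : ‖a‖ = ‖c‖) (hb : ‖b‖ = ‖d‖)
    (hab : ‖a - b‖ = ‖c - d‖) :
    a * conj b = c * conj d ∨ a * conj b = conj (c * conj d) := by
  refine eq_or_eq_conj_of_re_eq_of_norm_eq ?_ (by simp only [norm_mul, norm_conj, ha, hb])
  have h := congrArg (· ^ 2) hab
  have ha2 := congrArg (· ^ 2) ha
  have hb2 := congrArg (· ^ 2) hb
  simp only [Complex.sq_norm, normSq_sub] at h ha2 hb2
  linarith

end Complex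

section ConjugatePhaseRetrieval

variable {ι : Type*} {x y : ι → ℂ}

lemma exists_eq_mul_of_mul_conj_eq {k : ι} (hk : y k ≠ 0)
    (h : ∀ i, x i * conj (x k) = y i * conj (y k)) : ∃ u : ℂ, ‖u‖ = 1 ∧ ∀ i, x i = u * y i := by
  have hnorm : ‖x k‖ = ‖y k‖ := by
    have hkk := h k
    rw [Complex.mul_conj, Complex.mul_conj, Complex.ofReal_inj, ← Complex.sq_norm,
      ← Complex.sq_norm] at hkk
    exact (sq_eq_sq₀ (norm_nonneg _) (norm_nonneg _)).mp hkk
  have hxk : conj (x k) ≠ 0 := by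
    rw [map_ne_zero, ← norm_ne_zero_iff, hnorm, norm_ne_zero_iff]
    exact hk
  refine ⟨conj (y k) / conj (x k), ?_, fun i => ?_⟩
  · rw [norm_div, Complex.norm_conj, Complex.norm_conj, hnorm, div_self (norm_ne_zero_iff.mpr hk)]
  · rw [div_mul_eq_mul_div, eq_div_iff hxk, h i]
    ring

/-- The cocycle identity `(x_i x̄_k)(x_k x̄_l) = |x_k|² (x_i x̄_l)` forbids conjugating `x_i x̄_k`
alone once `y_k ȳ_l` is not real. -/
lemma mul_conj_eq_of_mul_conj_eq_of_conj_ne {i k l : ι} (hk : ‖x k‖ = ‖y k‖)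
    (hkl : x k * conj (x l) = y k * conj (y l))
    (hne : conj (y k * conj (y l)) ≠ y k * conj (y l))
    (hik : x i * conj (x k) = y i * conj (y k) ∨ x i * conj (x k) = conj (y i * conj (y k)))
    (hil : x i * conj (x l) = y i * conj (y l) ∨ x i * conj (x l) = conj (y i * conj (y l))) :
    x i * conj (x k) = y i * conj (y k) := by
  have hkk : x k * conj (x k) = y k * conj (y k) := by
    rw [Complex.mul_conj, Complex.mul_conj, Complex.normSq_eq_norm_sq, Complex.normSq_eq_norm_sq,
      hk]
  rcases hik with hik | hik
  · exact hik
  rw [map_mul, Complex.conj_conj] at hik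
  have hcocycle :
      conj (y i) * y k * (y k * conj (y l)) = y k * conj (y k) * (x i * conj (x l)) := by
    linear_combination -(y k * conj (y l)) * hik - (x i * conj (x k)) * hkl
      + (x i * conj (x l)) * hkk
  rcases hil with hil | hil
  · have hkl0 : y k * conj (y l) ≠ 0 := fun h0 => hne (by rw [h0, map_zero])
    rw [hik]
    refine mul_left_cancel₀ hkl0 ?_
    linear_combination hcocycle + (y k * conj (y k)) * hil
  · rw [map_mul, Complex.conj_conj] at hil
    have hne' : y k * conj (y l) - conj (y k) * y l ≠ 0 := by
      simpa [sub_eq_zero, mul_comm] using hne.symm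
    have hik0 : conj (y i) * y k = 0 := by
      refine (mul_eq_zero.mp ?_).resolve_left hne'
      linear_combination hcocycle + (y k * conj (y k)) * hil
    have hik0' : y i * conj (y k) = 0 := by simpa using congrArg conj hik0
    rw [hik, hik0, hik0']

lemma exists_eq_mul_of_mul_conj_eq_of_conj_ne (hnorm : ∀ i, ‖x i‖ = ‖y i‖)
    (hsub : ∀ i j, ‖x i - x j‖ = ‖y i - y j‖) {k l : ι}
    (hkl : x k * conj (x l) = y k * conj (y l))
    (hne : conj (y k * conj (y l)) ≠ y k * conj (y l)) :
    ∃ u : ℂ, ‖u‖ = 1 ∧ ∀ i, x i = u * y i := by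
  have hpair i j :=
    Complex.mul_conj_eq_or_eq_conj_of_norm_sub_eq (hnorm i) (hnorm j) (hsub i j)
  have hk : y k ≠ 0 := fun h0 => hne (by simp [h0])
  exact exists_eq_mul_of_mul_conj_eq hk fun i =>
    mul_conj_eq_of_mul_conj_eq_of_conj_ne (hnorm k) hkl hne (hpair i k) (hpair i l)

theorem exists_eq_mul_or_eq_mul_conj_of_norm_sub_eq (hnorm : ∀ i, ‖x i‖ = ‖y i‖)
    (hsub : ∀ i j, ‖x i - x j‖ = ‖y i - y j‖) :
    ∃ u : ℂ, ‖u‖ = 1 ∧ ((∀ i, x i = u * y i) ∨ ∀ i, x i = u * conj (y i)) := by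
  have hpair i j :=
    Complex.mul_conj_eq_or_eq_conj_of_norm_sub_eq (hnorm i) (hnorm j) (hsub i j)
  by_cases hreal : ∀ k l, conj (y k * conj (y l)) = y k * conj (y l)
  · have hgram i j : x i * conj (x j) = y i * conj (y j) :=
      (hpair i j).elim id fun h => h.trans (hreal i j)
    by_cases hy : ∀ k, y k = 0
    · refine ⟨1, norm_one, Or.inl fun i => ?_⟩
      rw [hy i, mul_zero, ← norm_eq_zero, hnorm i, hy i, norm_zero]
    · push Not at hy
      obtain ⟨k, hk⟩ := hy
      obtain ⟨u, hu, hxy⟩ := exists_eq_mul_of_mul_conj_eq hk fun i => hgram i k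
      exact ⟨u, hu, Or.inl hxy⟩
  · push Not at hreal
    obtain ⟨k, l, hne⟩ := hreal
    rcases hpair k l with hkl | hkl
    · obtain ⟨u, hu, hxy⟩ := exists_eq_mul_of_mul_conj_eq_of_conj_ne hnorm hsub hkl hne
      exact ⟨u, hu, Or.inl hxy⟩
    · obtain ⟨u, hu, hxy⟩ := exists_eq_mul_of_mul_conj_eq_of_conj_ne
        (y := fun i => conj (y i)) (by simpa using hnorm)
        (fun i j => by simpa [← map_sub] using hsub i j) (by simpa using hkl)
        (by simpa using hne.symm)
      exact ⟨u, hu, Or.inr hxy⟩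

end ConjugatePhaseRetrieval

lemma sum_mul_Vcols (z : Fin 3 → ℂ) (j : Fin 6) :
    ∑ i, z i * Vcols j i = ![z 0, z 1, z 2, z 0 - z 1, z 0 - z 2, z 1 - z 2] j := by
  fin_cases j <;> simp [Vcols, Fin.sum_univ_three, sub_eq_add_neg]

theorem example_matrix_does_cpr (x y : Fin 3 → ℂ)
    (h : ∀ j : Fin 6, ‖∑ i : Fin 3, x i * Vcols j i‖ = ‖∑ i : Fin 3, y i * Vcols j i‖) :
    ∃ θ : ℝ, (∀ i, x i = Complex.exp (θ * Complex.I) * y i) ∨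
      (∀ i, x i = Complex.exp (θ * Complex.I) * (starRingEnd ℂ) (y i)) := by
  simp only [sum_mul_Vcols] at h
  have hnorm : ∀ i, ‖x i‖ = ‖y i‖ := by
    intro i
    fin_cases i
    exacts [h 0, h 1, h 2]
  have hsub : ∀ i j, ‖x i - x j‖ = ‖y i - y j‖ := by
    intro i j
    fin_cases i <;> fin_cases j
    all_goals first
      | rw [sub_self, sub_self]
      | exact h 3 | exact h 4 | exact h 5
      | rw [norm_sub_rev, norm_sub_rev (y _)]; first | exact h 3 | exact h 4 | exact h 5
  obtain ⟨u, hu, hxy⟩ := exists_eq_mul_or_eq_mul_conj_of_norm_sub_eq hnorm hsub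
  have hexp : exp (arg u * I) = u := by simpa [hu] using norm_mul_exp_arg_mul_I u
  exact ⟨arg u, by simpa only [hexp] using hxy⟩
end
end
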